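/- arXiv:1607.03664 — 7 statements merged into one kernel-verified Lean document; each statement's English description precedes it below -/
import Mathlib

section
/- The map ĝ(y₁, y₂) = (y₂, (1 + y₂)/(y₁ y₂)) on the positive quadrant of ℝ² has no periodic points of minimal period 2: if ĝ(ĝ(y)) = y then ĝ(y) = y. -/
/-- The two coordinate equations of a period-two point of `ĝ`: after clearing denominators they
read `1 + y = x² y` and `1 + x = x y²`, whose difference factors as `(x - y) (1 + x y) = 0`. -/
theorem eq_of_one_add_div_mul_eq {x y : ℝ} (hx : 0 < x) (hy : 0 < y)
    (h₁ : (1 + y) / (x * y) = x) (h₂ : (1 + x) / (y * x) = y) : x = y := by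
  rw [div_eq_iff (by positivity)] at h₁ h₂
  have h : (x - y) * (1 + x * y) = 0 := by linear_combination h₂ - h₁
  have hpos : 1 + x * y ≠ 0 := by positivity
  exact sub_eq_zero.mp ((mul_eq_zero.mp h).resolve_right hpos)

theorem ghat_no_minimal_period_two
    (g : ℝ × ℝ → ℝ × ℝ) (hg : ∀ p : ℝ × ℝ, g p = (p.2, (1 + p.2) / (p.1 * p.2))) :
    ∀ y₁ y₂ : ℝ, 0 < y₁ → 0 < y₂ →
      g (g (y₁, y₂)) = (y₁, y₂) → g (y₁, y₂) = (y₁, y₂) := by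
  intro y₁ y₂ h₁ h₂ h
  simp only [hg, Prod.mk.injEq] at h ⊢
  obtain ⟨hfst, hsnd⟩ := h
  rw [hfst] at hsnd
  obtain rfl := eq_of_one_add_div_mul_eq h₁ h₂ hfst hsnd
  exact ⟨rfl, hsnd⟩
end

section
/- The map h₁(x₃, x₄) = (x₄, √r · x₄²/x₃) on the positive quadrant satisfies, for every n ≥ 1, h₁^[n](x₃, x₄) = (r^{n(n-1)/4} · x₄ⁿ/x₃^{n-1}, r^{n(n-1)/4 + n/2} · x₄^{n+1}/x₃ⁿ). -/
/-!
Each step multiplies the ratio `x₄ / x₃` by `c = √r`, so the `k`-th iterate has ratio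
`cᵏ x₄ / x₃` and its first coordinate is `x₃` times the product of the first `k` ratios, which gives the power
`c ^ (k.choose 2) = r ^ (k (k - 1) / 4)`.
-/

theorem iterate_succ_mul_sq_div {K : Type*} [Field K] {c a b : K} (hc : c ≠ 0) (ha : a ≠ 0)
    (hb : b ≠ 0) (n : ℕ) :
    (fun p : K × K => (p.2, c * p.2 ^ 2 / p.1))^[n + 1] (a, b) =
      (c ^ (n + 1).choose 2 * b ^ (n + 1) / a ^ n,
       c ^ (n + 2).choose 2 * b ^ (n + 2) / a ^ (n + 1)) := by
  induction n with
  | zero => simp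
  | succ n ih =>
    have hchoose : (n + 1 + 2).choose 2 + (n + 1).choose 2 = 2 * (n + 2).choose 2 + 1 := by
      simp only [Nat.choose_two_right]
      grind
    have hc_pow :
        c ^ (n + 1 + 2).choose 2 * c ^ (n + 1).choose 2 = c * (c ^ (n + 2).choose 2) ^ 2 := by
      rw [← pow_add, hchoose, pow_succ, pow_mul]
      ring
    rw [Function.iterate_succ_apply', ih, Prod.mk.injEq]
    refine ⟨rfl, ?_⟩
    field_simp
    linear_combination (-(b ^ (n + 2)) ^ 2 * a ^ n * a ^ (n + 2)) * hc_pow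

theorem sqrt_pow_eq_rpow {r : ℝ} (hr : 0 ≤ r) (k : ℕ) : √r ^ k = r ^ ((k : ℝ) / 2) := by
  rw [Real.rpow_div_two_eq_sqrt _ hr, Real.rpow_natCast]

theorem h1_iterate_formula (r : ℝ) (hr : 0 < r)
    (h₁ : ℝ × ℝ → ℝ × ℝ) (hh₁ : ∀ p : ℝ × ℝ, h₁ p = (p.2, Real.sqrt r * p.2 ^ 2 / p.1)) :
    ∀ x₃ x₄ : ℝ, 0 < x₃ → 0 < x₄ → ∀ n : ℕ, 1 ≤ n →
      h₁^[n] (x₃, x₄) =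
        (r ^ ((n : ℝ) * ((n : ℝ) - 1) / 4) * x₄ ^ n / x₃ ^ (n - 1),
         r ^ ((n : ℝ) * ((n : ℝ) - 1) / 4 + (n : ℝ) / 2) * x₄ ^ (n + 1) / x₃ ^ n) := by
  intro x₃ x₄ hx₃ hx₄ n hn
  obtain ⟨m, rfl⟩ := Nat.exists_eq_add_of_le' hn
  obtain rfl : h₁ = fun p => (p.2, √r * p.2 ^ 2 / p.1) := funext hh₁
  rw [iterate_succ_mul_sq_div (Real.sqrt_pos.2 hr).ne' hx₃.ne' hx₄.ne', sqrt_pow_eq_rpow hr.le,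
    sqrt_pow_eq_rpow hr.le, Nat.cast_choose_two, Nat.cast_choose_two, Nat.add_sub_cancel]
  congr 4 <;> push_cast <;> ring
end

section
/- The map h₂(x₃, x₄) = (λ x₄²/x₃, λ r x₄³/x₃²) on the positive quadrant satisfies, for every n ≥ 1, h₂^[n](x₃, x₄) = (λⁿ r^{n(n-1)} x₄^{2n}/x₃^{2n-1}, λⁿ r^{n²} x₄^{2n+1}/x₃^{2n}). -/
/-!
Write a point as `(a, a * c)`. One step of `h₂` sends it to `(l c² a, l c² a · r c)`: the ratio `c`
of the coordinates is multiplied by `r` and the first coordinate by `l c²`. After `n` steps the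
ratio is `rⁿ c` and the first coordinate is `lⁿ r^(n(n-1)) c^(2n) a`, since
`2 (0 + 1 + ⋯ + (n-1)) = n(n-1)`. Taking `a = x₃`, `c = x₄ / x₃` gives the formula.
-/

section

variable {K : Type*} [Field K]

def h₂Map (l r : K) (p : K × K) : K × K :=
  (l * p.2 ^ 2 / p.1, l * r * p.2 ^ 3 / p.1 ^ 2)

theorem h₂Map_mk_mul (l r a c : K) :
    h₂Map l r (a, a * c) = (l * c ^ 2 * a, l * c ^ 2 * a * (r * c)) := by
  rcases eq_or_ne a 0 with rfl | ha
  · simp [h₂Map]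
  · simp only [h₂Map, Prod.mk.injEq]
    constructor <;> field_simp

theorem h₂Map_iterate_mk_mul (l r a c : K) (n : ℕ) :
    (h₂Map l r)^[n] (a, a * c) =
      (l ^ n * r ^ (n * (n - 1)) * c ^ (2 * n) * a,
       l ^ n * r ^ (n * (n - 1)) * c ^ (2 * n) * a * (r ^ n * c)) := by
  induction n with
  | zero => simp
  | succ n ih =>
    have hexp : (n + 1) * (n + 1 - 1) = n * (n - 1) + 2 * n := by
      rcases n with _ | n
      · rfl
      · simp only [Nat.add_sub_cancel]; ring
    rw [Function.iterate_succ_apply', ih, h₂Map_mk_mul, hexp]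
    ext <;> ring

end

theorem h2_iterate_formula_general (l r : ℝ)
    (h₂ : ℝ × ℝ → ℝ × ℝ)
    (hh₂ : ∀ p : ℝ × ℝ, h₂ p = (l * p.2 ^ 2 / p.1, l * r * p.2 ^ 3 / p.1 ^ 2)) :
    ∀ x₃ x₄ : ℝ, 0 < x₃ → 0 < x₄ → ∀ n : ℕ, 1 ≤ n →
      h₂^[n] (x₃, x₄) =
        (l ^ n * r ^ (n * (n - 1)) * x₄ ^ (2 * n) / x₃ ^ (2 * n - 1),
         l ^ n * r ^ (n ^ 2) * x₄ ^ (2 * n + 1) / x₃ ^ (2 * n)) := by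
  intro x₃ x₄ hx₃ _ n hn
  obtain rfl : h₂ = h₂Map l r := funext hh₂
  obtain ⟨m, rfl⟩ : ∃ m, n = m + 1 := ⟨n - 1, by omega⟩
  have hx₃ : x₃ ≠ 0 := hx₃.ne'
  have h := h₂Map_iterate_mk_mul l r x₃ (x₄ / x₃) (m + 1)
  rw [mul_div_cancel₀ x₄ hx₃] at h
  rw [h, Nat.add_sub_cancel, show 2 * (m + 1) - 1 = 2 * m + 1 by omega,
    show (m + 1) ^ 2 = (m + 1) * m + (m + 1) by ring,
    div_pow, show 2 * (m + 1) = 2 * m + 1 + 1 by ring, pow_succ x₃]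
  congr 1
  · field_simp
  · field_simp; ring

theorem h2_iterate_formula (l r : ℝ) (hl : 0 < l) (hr : 0 < r)
    (h₂ : ℝ × ℝ → ℝ × ℝ)
    (hh₂ : ∀ p : ℝ × ℝ, h₂ p = (l * p.2 ^ 2 / p.1, l * r * p.2 ^ 3 / p.1 ^ 2)) :
    ∀ x₃ x₄ : ℝ, 0 < x₃ → 0 < x₄ → ∀ n : ℕ, 1 ≤ n →
      h₂^[n] (x₃, x₄) =
        (l ^ n * r ^ (n * (n - 1)) * x₄ ^ (2 * n) / x₃ ^ (2 * n - 1),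
         l ^ n * r ^ (n ^ 2) * x₄ ^ (2 * n + 1) / x₃ ^ (2 * n)) :=
  h2_iterate_formula_general l r h₂ hh₂
end

section
/- For ξ > 1, the map f(x, y) = (y, ξ y²/x) on the positive quadrant has no periodic points: there is no point (x, y) with x, y > 0 and positive integer n such that f^[n](x, y) = (x, y). -/
/-! Along an orbit in the open quadrant the ratio `y / x` is multiplied by `ξ` at every step, so
after `n > 0` steps it has grown by the factor `ξ ^ n > 1` and the orbit cannot close up. -/

open Function Set

theorem iterate_apply_eq_pow_mul_of_mapsTo {α : Type*} {g : α → α} {s : Set α}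
    (hg : MapsTo g s s) (φ : α → ℝ) (c : ℝ) (hφ : ∀ p ∈ s, φ (g p) = c * φ p) (n : ℕ) :
    ∀ p ∈ s, φ (g^[n] p) = c ^ n * φ p := by
  induction n with
  | zero => simp
  | succ k ih =>
    intro p hp
    rw [iterate_succ_apply', hφ _ (hg.iterate k hp), ih p hp, pow_succ']
    ring

section

variable {ξ : ℝ} {f : ℝ × ℝ → ℝ × ℝ}

theorem mapsTo_pos_quadrant (hf : ∀ p : ℝ × ℝ, f p = (p.2, ξ * p.2 ^ 2 / p.1)) (hξ : 0 < ξ) :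
    MapsTo f {p | 0 < p.1 ∧ 0 < p.2} {p | 0 < p.1 ∧ 0 < p.2} := by
  rintro p ⟨hx, hy⟩
  rw [hf]
  exact ⟨hy, by positivity⟩

theorem snd_div_fst_apply (hf : ∀ p : ℝ × ℝ, f p = (p.2, ξ * p.2 ^ 2 / p.1)) {p : ℝ × ℝ}
    (hx : p.1 ≠ 0) (hy : p.2 ≠ 0) :
    (f p).2 / (f p).1 = ξ * (p.2 / p.1) := by
  rw [hf]
  field_simp

end

theorem no_periodic_points_of_one_lt (ξ : ℝ) (hξ : 1 < ξ)
    (f : ℝ × ℝ → ℝ × ℝ) (hf : ∀ p : ℝ × ℝ, f p = (p.2, ξ * p.2 ^ 2 / p.1)) :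
    ∀ x y : ℝ, 0 < x → 0 < y → ∀ n : ℕ, 0 < n → f^[n] (x, y) ≠ (x, y) := by
  intro x y hx hy n hn hper
  have hratio : y / x = ξ ^ n * (y / x) := by
    simpa [hper] using iterate_apply_eq_pow_mul_of_mapsTo (mapsTo_pos_quadrant hf (by linarith))
      (fun p => p.2 / p.1) ξ (fun p hp => snd_div_fst_apply hf hp.1.ne' hp.2.ne') n (x, y) ⟨hx, hy⟩
  have hgrow : y / x < ξ ^ n * (y / x) :=
    lt_mul_of_one_lt_left (div_pos hy hx) (one_lt_pow₀ hξ hn.ne')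
  exact hgrow.ne hratio
end

section
/- The map ψ(y₁, y₂, y₃) = (y₂, (1 + y₂)/y₁, y₂(1 + y₂)/y₃) on the positive octant of ℝ³ is globally 10-periodic: ψ^[10] = id. -/
/-!
The first two coordinates of `ψ` follow the Lyness recurrence `x ↦ (1 + x) / x'`, which is
`5`-periodic. Along the way the third coordinate undergoes five maps of the form `z ↦ g / z`, so
`ψ^[5]` fixes `(y₁, y₂)` and acts on `y₃` as the involution `y₃ ↦ K(y₁, y₂) / y₃`.
-/

noncomputable def psi (p : ℝ × ℝ × ℝ) : ℝ × ℝ × ℝ :=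
  (p.2.1, (1 + p.2.1) / p.1, p.2.1 * (1 + p.2.1) / p.2.2)

theorem psi_iterate_five {a b : ℝ} (ha : 0 < a) (hb : 0 < b) (c : ℝ) :
    psi^[5] (a, b, c) = (a, b, a * b * (1 + a) * (1 + b) / (1 + a + b) / c) := by
  have : 1 + a + b ≠ 0 := by positivity
  simp only [Function.iterate_succ_apply', Function.iterate_zero_apply, psi, Prod.mk.injEq]
  refine ⟨?_, ?_, ?_⟩ <;> field_simp <;> ring

theorem psi_iterate_ten {a b : ℝ} (ha : 0 < a) (hb : 0 < b) (c : ℝ) :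
    psi^[10] (a, b, c) = (a, b, c) := by
  have hK : a * b * (1 + a) * (1 + b) / (1 + a + b) ≠ 0 := by positivity
  rw [show 10 = 5 + 5 from rfl, Function.iterate_add_apply, psi_iterate_five ha hb,
    psi_iterate_five ha hb, div_div_cancel₀ hK]

theorem psi_globally_ten_periodic
    (ψ : ℝ × ℝ × ℝ → ℝ × ℝ × ℝ)
    (hψ : ∀ p : ℝ × ℝ × ℝ, ψ p = (p.2.1, (1 + p.2.1) / p.1, p.2.1 * (1 + p.2.1) / p.2.2)) :
    ∀ y₁ y₂ y₃ : ℝ, 0 < y₁ → 0 < y₂ → 0 < y₃ →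
      ψ^[10] (y₁, y₂, y₃) = (y₁, y₂, y₃) := by
  obtain rfl : ψ = psi := funext hψ
  intro y₁ y₂ y₃ h₁ h₂ _
  exact psi_iterate_ten h₁ h₂ y₃
end

section
/- Let (a, b) be positive reals with (a, b) ≠ (φ, φ), where φ is the golden ratio, and let g(a, b) = ab(a+1)(b+1)/(a+b+1). Then (a, b, √(g(a,b))) is a fixed point of the fifth iterate of the map ψ(y₁, y₂, y₃) = (y₂, (1 + y₂)/y₁, y₂(1 + y₂)/y₃), and it is the unique point of the form (a, b, c) with c > 0 fixed by ψ^[5]. -/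
/-!
The first two coordinates of `ψ` follow the globally 5-periodic Lyness map, and a direct
computation shows that five steps send the third coordinate `c` to `g(a, b) / c`. So `(a, b, c)`
with `c > 0` is fixed by `ψ^[5]` exactly when `c² = g(a, b)`.
-/

noncomputable def lynessExtension (p : ℝ × ℝ × ℝ) : ℝ × ℝ × ℝ :=
  (p.2.1, (1 + p.2.1) / p.1, p.2.1 * (1 + p.2.1) / p.2.2)

theorem lynessExtension_iterate_five {a b c : ℝ} (ha : 0 < a) (hb : 0 < b) (hc : 0 < c) :
    lynessExtension^[5] (a, b, c) = (a, b, a * b * (a + 1) * (b + 1) / (a + b + 1) / c) := by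
  have : 1 + a + b ≠ 0 := by positivity
  simp only [Function.iterate_succ, Function.iterate_zero, Function.comp_apply, id,
    lynessExtension, Prod.mk.injEq]
  refine ⟨?_, ?_, ?_⟩ <;> field_simp <;> ring

theorem Real.div_eq_self_iff_eq_sqrt {g c : ℝ} (hc : 0 < c) : g / c = c ↔ c = √g := by
  rw [div_eq_iff hc.ne', eq_comm (a := c), Real.sqrt_eq_iff_mul_self_eq_of_pos hc, eq_comm]

theorem psi_fifth_iterate_fixed_point_general
    (ψ : ℝ × ℝ × ℝ → ℝ × ℝ × ℝ)
    (hψ : ∀ p : ℝ × ℝ × ℝ, ψ p = (p.2.1, (1 + p.2.1) / p.1, p.2.1 * (1 + p.2.1) / p.2.2))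
    (a b : ℝ) (ha : 0 < a) (hb : 0 < b)
    (g : ℝ) (hg : g = a * b * (a + 1) * (b + 1) / (a + b + 1)) :
    ψ^[5] (a, b, Real.sqrt g) = (a, b, Real.sqrt g) ∧
      ∀ c : ℝ, 0 < c → ψ^[5] (a, b, c) = (a, b, c) → c = Real.sqrt g := by
  obtain rfl : ψ = lynessExtension := funext hψ
  have hg_pos : 0 < g := hg ▸ by positivity
  have fixed_iff {c : ℝ} (hc : 0 < c) : lynessExtension^[5] (a, b, c) = (a, b, c) ↔ c = √g := by
    rw [lynessExtension_iterate_five ha hb hc, ← hg]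
    simpa using Real.div_eq_self_iff_eq_sqrt hc
  exact ⟨(fixed_iff (Real.sqrt_pos.mpr hg_pos)).mpr rfl, fun c hc => (fixed_iff hc).mp⟩

theorem psi_fifth_iterate_fixed_point
    (ψ : ℝ × ℝ × ℝ → ℝ × ℝ × ℝ)
    (hψ : ∀ p : ℝ × ℝ × ℝ, ψ p = (p.2.1, (1 + p.2.1) / p.1, p.2.1 * (1 + p.2.1) / p.2.2))
    (a b : ℝ) (ha : 0 < a) (hb : 0 < b)
    (hab : (a, b) ≠ ((1 + Real.sqrt 5) / 2, (1 + Real.sqrt 5) / 2))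
    (g : ℝ) (hg : g = a * b * (a + 1) * (b + 1) / (a + b + 1)) :
    ψ^[5] (a, b, Real.sqrt g) = (a, b, Real.sqrt g) ∧
      ∀ c : ℝ, 0 < c → ψ^[5] (a, b, c) = (a, b, c) → c = Real.sqrt g :=
  psi_fifth_iterate_fixed_point_general ψ hψ a b ha hb g hg
end

section
/- Let r be the unique positive root of x³ = 1 + x. If positive reals (x₁, …, x₅) satisfy x₁x₄ = r x₂x₃, x₂x₅ = r x₃x₄ and x₃x₅ = √r · x₄², then the solution of the Somos-5 recurrence x_{n+5} x_n = x_{n+1} x_{n+4} + x_{n+2} x_{n+3} with this initial data satisfies x_{n+5} = r^{(n+2)(n+1)/4} · x₄^{n+2}/x₃^{n+1} for all n ≥ 1. -/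
/-!
The initial data lie on the monomial solution `x_t = r^((t-3)(t-4)/4) * x₄^(t-3) * x₃^(4-t)`,
for which a product of two terms depends only on their mean and distance:
`x_s * x_t = r^((s-t)²/8) * x_((s+t)/2)²`. The Somos-5 relation for it is then
`r^(25/8) = r^(9/8) + r^(1/8)`, i.e. `r³ = 1 + r`, and the three hypotheses are this product rule
at distances 2 and 3, which pins down `x₅, x₂, x₁` from `x₃, x₄`. A solution with nonzero terms
is determined by its first five terms.
-/

namespace Somos5

def IsSolution {K : Type*} [Add K] [Mul K] (x : ℕ → K) : Prop :=
  ∀ n : ℕ, 1 ≤ n → x (n + 5) * x n = x (n + 1) * x (n + 4) + x (n + 2) * x (n + 3)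

theorem IsSolution.eq_of_eqOn_init {K : Type*} [CommRing K] [IsDomain K] {x y : ℕ → K}
    (hx : IsSolution x) (hy : IsSolution y) (hy0 : ∀ n, 1 ≤ n → y n ≠ 0)
    (hinit : ∀ i, 1 ≤ i → i ≤ 5 → x i = y i) : ∀ n, 1 ≤ n → x n = y n := by
  intro n
  induction n using Nat.strong_induction_on with
  | _ n ih =>
    intro hn
    rcases le_or_gt n 5 with hn5 | hn6
    · exact hinit n hn hn5
    obtain ⟨k, rfl⟩ : ∃ k, n = k + 1 + 5 := ⟨n - 6, by omega⟩
    have hxk := hx (k + 1) (by omega)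
    rw [ih (k + 1) (by omega) (by omega), ih (k + 1 + 1) (by omega) (by omega),
      ih (k + 1 + 2) (by omega) (by omega), ih (k + 1 + 3) (by omega) (by omega),
      ih (k + 1 + 4) (by omega) (by omega), ← hy (k + 1) (by omega)] at hxk
    exact mul_right_cancel₀ (hy0 (k + 1) (by omega)) hxk

noncomputable def singular (r a b t : ℝ) : ℝ :=
  r ^ ((t - 3) * (t - 4) / 4) * b ^ (t - 3) * a ^ (4 - t)

section
variable {r a b : ℝ} (hr : 0 < r) (ha : 0 < a) (hb : 0 < b)
include hr ha hb

theorem singular_pos (t : ℝ) : 0 < singular r a b t := by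
  unfold singular; positivity

theorem log_singular (t : ℝ) :
    Real.log (singular r a b t) =
      (t - 3) * (t - 4) / 4 * Real.log r + (t - 3) * Real.log b + (4 - t) * Real.log a := by
  rw [singular, Real.log_mul (by positivity) (by positivity),
    Real.log_mul (by positivity) (by positivity), Real.log_rpow hr, Real.log_rpow hb,
    Real.log_rpow ha]

theorem singular_mul_singular (s t : ℝ) :
    singular r a b s * singular r a b t =
      r ^ ((s - t) ^ 2 / 8) * singular r a b ((s + t) / 2) ^ 2 := by
  have hpos := singular_pos hr ha hb
  refine Real.log_injOn_pos (mul_pos (hpos s) (hpos t))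
    (mul_pos (by positivity) (pow_pos (hpos _) 2)) ?_
  rw [Real.log_mul (hpos s).ne' (hpos t).ne',
    Real.log_mul (by positivity) (pow_pos (hpos _) 2).ne',
    Real.log_pow, Real.log_rpow hr, log_singular hr ha hb, log_singular hr ha hb,
    log_singular hr ha hb]
  push_cast
  ring

theorem singular_mul_singular_add_two (t : ℝ) :
    singular r a b t * singular r a b (t + 2) = Real.sqrt r * singular r a b (t + 1) ^ 2 := by
  rw [singular_mul_singular hr ha hb, Real.sqrt_eq_rpow,
    show (t - (t + 2)) ^ 2 / 8 = 1 / 2 by ring, show (t + (t + 2)) / 2 = t + 1 by ring]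

theorem singular_mul_singular_add_three (t : ℝ) :
    singular r a b t * singular r a b (t + 3) =
      r * (singular r a b (t + 1) * singular r a b (t + 2)) := by
  rw [singular_mul_singular hr ha hb, singular_mul_singular hr ha hb, ← mul_assoc,
    ← Real.rpow_one_add' hr.le (by positivity),
    show (t - (t + 3)) ^ 2 / 8 = 1 + (t + 1 - (t + 2)) ^ 2 / 8 by ring,
    show (t + (t + 3)) / 2 = (t + 1 + (t + 2)) / 2 by ring]

theorem singular_add_five_mul_singular (hr3 : r ^ 3 = 1 + r) (s : ℝ) :
    singular r a b (s + 5) * singular r a b s =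
      singular r a b (s + 1) * singular r a b (s + 4) +
        singular r a b (s + 2) * singular r a b (s + 3) := by
  have hcentre (u v : ℝ) (huv : u + v = 2 * s + 5) : singular r a b u * singular r a b v =
      r ^ ((u - v) ^ 2 / 8) * singular r a b (s + 5 / 2) ^ 2 := by
    rw [singular_mul_singular hr ha hb, show (u + v) / 2 = s + 5 / 2 by linarith]
  rw [hcentre _ _ (by ring), hcentre _ _ (by ring), hcentre _ _ (by ring),
    show (s + 5 - s) ^ 2 / 8 = 1 / 8 + 3 by ring,
    show (s + 1 - (s + 4)) ^ 2 / 8 = 1 / 8 + 1 by ring,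
    show (s + 2 - (s + 3)) ^ 2 / 8 = 1 / 8 by ring, Real.rpow_add hr, Real.rpow_add hr,
    Real.rpow_ofNat, hr3, Real.rpow_one]
  ring

theorem isSolution_singular (hr3 : r ^ 3 = 1 + r) :
    IsSolution fun n : ℕ ↦ singular r a b n := by
  intro n _
  push_cast
  exact singular_add_five_mul_singular hr ha hb hr3 n

end

theorem singular_three (r a b : ℝ) : singular r a b 3 = a := by
  norm_num [singular]

theorem singular_four (r a b : ℝ) : singular r a b 4 = b := by
  norm_num [singular]

theorem singular_nat_add_five {r a b : ℝ} (ha : 0 < a) (n : ℕ) :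
    singular r a b ((n + 5 : ℕ) : ℝ) =
      r ^ (((n : ℝ) + 2) * ((n : ℝ) + 1) / 4) * b ^ (n + 2) / a ^ (n + 1) := by
  rw [singular, show ((n + 5 : ℕ) : ℝ) - 3 = ((n + 2 : ℕ) : ℝ) by push_cast; ring,
    show 4 - ((n + 5 : ℕ) : ℝ) = -((n + 1 : ℕ) : ℝ) by push_cast; ring,
    Real.rpow_natCast, Real.rpow_neg ha.le, Real.rpow_natCast]
  push_cast
  rw [show (n : ℝ) + 5 - 4 = n + 1 by ring]
  ring

theorem eq_singular_of_init {r : ℝ} (hr : 0 < r) {x : ℕ → ℝ} (h3 : 0 < x 3) (h4 : 0 < x 4)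
    (h14 : x 1 * x 4 = r * (x 2 * x 3)) (h25 : x 2 * x 5 = r * (x 3 * x 4))
    (h35 : x 3 * x 5 = Real.sqrt r * x 4 ^ 2) :
    ∀ i, 1 ≤ i → i ≤ 5 → x i = singular r (x 3) (x 4) i := by
  have hF := singular_pos hr h3 h4
  have e5 : x 5 = singular r (x 3) (x 4) 5 := by
    have h35' := singular_mul_singular_add_two hr h3 h4 3
    norm_num [singular_three, singular_four] at h35'
    exact mul_left_cancel₀ h3.ne' (h35.trans h35'.symm)
  have e2 : x 2 = singular r (x 3) (x 4) 2 := by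
    have h25' := singular_mul_singular_add_three hr h3 h4 2
    norm_num [singular_three, singular_four, ← e5] at h25'
    exact mul_right_cancel₀ (e5 ▸ hF 5).ne' (h25.trans h25'.symm)
  have e1 : x 1 = singular r (x 3) (x 4) 1 := by
    have h14' := singular_mul_singular_add_three hr h3 h4 1
    norm_num [singular_three, singular_four, ← e2] at h14'
    exact mul_right_cancel₀ h4.ne' (h14.trans h14'.symm)
  intro i hi1 hi5
  interval_cases i <;> norm_num [e1, e2, e5, singular_three, singular_four]

end Somos5

theorem somos5_singular_solution (r : ℝ) (hr : 0 < r) (hr3 : r ^ 3 = 1 + r)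
    (x : ℕ → ℝ) (hpos : ∀ i, 1 ≤ i → i ≤ 5 → 0 < x i)
    (h14 : x 1 * x 4 = r * (x 2 * x 3))
    (h25 : x 2 * x 5 = r * (x 3 * x 4))
    (h35 : x 3 * x 5 = Real.sqrt r * (x 4) ^ 2)
    (hrec : ∀ n : ℕ, 1 ≤ n →
      x (n + 5) * x n = x (n + 1) * x (n + 4) + x (n + 2) * x (n + 3)) :
    ∀ n : ℕ, 1 ≤ n →
      x (n + 5) = r ^ (((n : ℝ) + 2) * ((n : ℝ) + 1) / 4) * (x 4) ^ (n + 2) / (x 3) ^ (n + 1) := by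
  open Somos5 in
  intro n _
  have h3 : 0 < x 3 := hpos 3 (by norm_num) (by norm_num)
  have h4 : 0 < x 4 := hpos 4 (by norm_num) (by norm_num)
  rw [← singular_nat_add_five h3]
  exact IsSolution.eq_of_eqOn_init hrec (isSolution_singular hr h3 h4 hr3)
    (fun m _ ↦ (singular_pos hr h3 h4 m).ne') (eq_singular_of_init hr h3 h4 h14 h25 h35)
    (n + 5) (by omega)
end
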